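/- Let T ∈ B(H) and let α, β ≥ 0 with (α,β) ≠ (0,0). Then ‖T‖_{α,β}² ≥ max{ (1/2)·‖ (α/4)(T*T + TT*) + β·T*T ‖, (1/3)·‖ (α/2)(T*T + TT*) + β·T*T ‖ }. -/

import Mathlib

open ContinuousLinearMap

variable {H : Type*} [NormedAddCommGroup H] [InnerProductSpace ℂ H] [CompleteSpace H]

/-- The numerical radius `w(T) = sup {|⟨Tx,x⟩| : ‖x‖ = 1}`. -/
noncomputable def numRad (T : H →L[ℂ] H) : ℝ :=
  sSup {r : ℝ | ∃ x : H, ‖x‖ = 1 ∧ r = ‖(inner ℂ (T x) x : ℂ)‖}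

/-- The `(α,β)`-norm `‖T‖_{α,β} = sup {√(α|⟨Tx,x⟩|² + β‖Tx‖²) : ‖x‖ = 1}`. -/
noncomputable def abNorm (α β : ℝ) (T : H →L[ℂ] H) : ℝ :=
  sSup {r : ℝ | ∃ x : H, ‖x‖ = 1 ∧
    r = Real.sqrt (α * ‖(inner ℂ (T x) x : ℂ)‖ ^ 2 + β * ‖T x‖ ^ 2)}

/-!
On the unit sphere both `α |⟨Tx,x⟩|²` and `β ‖Tx‖²` are at most `‖T‖²_{α,β}`, whence
`α w(T)² ≤ ‖T‖²_{α,β}` and `β ‖T*T‖ ≤ ‖T‖²_{α,β}`. Kittaneh's inequality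
`‖T*T + TT*‖ ≤ 4 w(T)²` comes from `2 (T*T + TT*) = (T + T*)² - (T - T*)²` together with
`‖T ± T*‖ ≤ 2 w(T)`: the operators `T + T*` and `i (T - T*)` are self-adjoint, with quadratic
forms of modulus at most `2 |⟨Tx,x⟩|`, and the norm of a self-adjoint operator is the supremum of
its quadratic form on the unit sphere. The triangle inequality then bounds the two operators in the maximum by `2 ‖T‖²_{α,β}` and `3 ‖T‖²_{α,β}`.
-/

open RCLike in
theorem ContinuousLinearMap.norm_le_of_forall_abs_re_inner_self_le {𝕜 E : Type*} [RCLike 𝕜]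
    [NormedAddCommGroup E] [InnerProductSpace 𝕜 E] {A : E →L[𝕜] E}
    (hA : (A : E →ₗ[𝕜] E).IsSymmetric) {c : ℝ} (hc : 0 ≤ c)
    (h : ∀ x, ‖x‖ = 1 → |re (inner 𝕜 (A x) x)| ≤ c) : ‖A‖ ≤ c := by
  rw [A.norm_eq_iSup_rayleighQuotient hA]
  refine ciSup_le fun x => ?_
  rcases eq_or_ne x 0 with rfl | hx
  · simpa using hc
  · have hu : ‖(‖x‖⁻¹ : 𝕜) • x‖ = 1 := by simp [norm_smul, hx]
    rw [← A.rayleigh_smul x (c := (‖x‖⁻¹ : 𝕜)) (by simpa using hx)]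
    simpa only [rayleighQuotient, reApplyInnerSelf_apply, hu, one_pow, div_one] using h _ hu

theorem ContinuousLinearMap.norm_inner_apply_self_le {𝕜 E : Type*} [RCLike 𝕜]
    [NormedAddCommGroup E] [InnerProductSpace 𝕜 E] (A : E →L[𝕜] E) {x : E} (hx : ‖x‖ = 1) :
    ‖inner 𝕜 (A x) x‖ ≤ ‖A‖ :=
  (norm_inner_le_norm _ _).trans (by rw [hx, mul_one]; exact A.unit_le_opNorm x hx.le)

section NumericalRadius

variable {E : Type*} [NormedAddCommGroup E] [InnerProductSpace ℂ E]

theorem norm_inner_le_numRad (T : E →L[ℂ] E) {x : E} (hx : ‖x‖ = 1) :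
    ‖inner ℂ (T x) x‖ ≤ numRad T := by
  refine le_csSup ⟨‖T‖, ?_⟩ ⟨x, hx, rfl⟩
  rintro _ ⟨y, hy, rfl⟩
  exact T.norm_inner_apply_self_le hy

theorem numRad_le_of_forall {T : E →L[ℂ] E} {c : ℝ} (hc : 0 ≤ c)
    (h : ∀ x, ‖x‖ = 1 → ‖inner ℂ (T x) x‖ ≤ c) : numRad T ≤ c :=
  Real.sSup_le (by rintro _ ⟨x, hx, rfl⟩; exact h x hx) hc

theorem numRad_nonneg (T : E →L[ℂ] E) : 0 ≤ numRad T :=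
  Real.sSup_nonneg (by rintro _ ⟨x, -, rfl⟩; exact norm_nonneg _)

theorem numRad_smul_le (c : ℂ) (T : E →L[ℂ] E) : numRad (c • T) ≤ ‖c‖ * numRad T :=
  numRad_le_of_forall (by have := numRad_nonneg T; positivity) fun x hx => by
    rw [smul_apply, inner_smul_left, norm_mul, RCLike.norm_conj]
    exact mul_le_mul_of_nonneg_left (norm_inner_le_numRad T hx) (norm_nonneg c)

variable [CompleteSpace E]

theorem norm_add_adjoint_le_two_mul_numRad (T : E →L[ℂ] E) :
    ‖T + adjoint T‖ ≤ 2 * numRad T := by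
  have hT : IsSelfAdjoint (T + adjoint T) := IsSelfAdjoint.add_star_self T
  refine norm_le_of_forall_abs_re_inner_self_le hT.isSymmetric
    (by have := numRad_nonneg T; positivity) fun x hx => ?_
  have hre : RCLike.re (inner ℂ ((T + adjoint T) x) x) = 2 * (inner ℂ (T x) x).re := by
    rw [add_apply, inner_add_left, adjoint_inner_left, map_add, inner_re_symm x, ← two_mul]
    rfl
  rw [hre, abs_mul, abs_two]
  exact mul_le_mul_of_nonneg_left
    ((Complex.abs_re_le_norm _).trans (norm_inner_le_numRad T hx)) zero_le_two

theorem norm_adjoint_mul_add_mul_adjoint_le (T : E →L[ℂ] E) :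
    ‖adjoint T * T + T * adjoint T‖ ≤ 4 * numRad T ^ 2 := by
  have hA : ‖T + adjoint T‖ ≤ 2 * numRad T := norm_add_adjoint_le_two_mul_numRad T
  have hD : ‖T - adjoint T‖ ≤ 2 * numRad T := by
    have h := norm_add_adjoint_le_two_mul_numRad (Complex.I • T)
    have hI : Complex.I • T + adjoint (Complex.I • T) = Complex.I • (T - adjoint T) := by
      simp [map_smulₛₗ, sub_eq_add_neg]
    rw [hI, norm_smul, Complex.norm_I, one_mul] at h
    simpa using h.trans (mul_le_mul_of_nonneg_left (numRad_smul_le Complex.I T) zero_le_two)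
  have hsq : (adjoint T * T + T * adjoint T) + (adjoint T * T + T * adjoint T) =
      (T + adjoint T) * (T + adjoint T) - (T - adjoint T) * (T - adjoint T) := by
    noncomm_ring
  have hw := numRad_nonneg T
  have h2 : 2 * ‖adjoint T * T + T * adjoint T‖ ≤ 2 * (4 * numRad T ^ 2) :=
    calc 2 * ‖adjoint T * T + T * adjoint T‖
        = ‖(T + adjoint T) * (T + adjoint T) - (T - adjoint T) * (T - adjoint T)‖ := by
          rw [← hsq, ← two_smul ℝ, norm_smul]; norm_num
      _ ≤ ‖T + adjoint T‖ * ‖T + adjoint T‖ + ‖T - adjoint T‖ * ‖T - adjoint T‖ :=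
          (norm_sub_le _ _).trans (add_le_add (norm_mul_le _ _) (norm_mul_le _ _))
      _ ≤ 2 * numRad T * (2 * numRad T) + 2 * numRad T * (2 * numRad T) := by gcongr
      _ = 2 * (4 * numRad T ^ 2) := by ring
  linarith

end NumericalRadius

section AlphaBetaNorm

variable {E : Type*} [NormedAddCommGroup E] [InnerProductSpace ℂ E] {α β : ℝ}

theorem abNorm_nonneg (α β : ℝ) (T : E →L[ℂ] E) : 0 ≤ abNorm α β T :=
  Real.sSup_nonneg (by rintro _ ⟨x, -, rfl⟩; exact Real.sqrt_nonneg _)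

theorem le_sq_abNorm (hα : 0 ≤ α) (hβ : 0 ≤ β) (T : E →L[ℂ] E) {x : E} (hx : ‖x‖ = 1) :
    α * ‖inner ℂ (T x) x‖ ^ 2 + β * ‖T x‖ ^ 2 ≤ abNorm α β T ^ 2 := by
  have hbdd : BddAbove {r : ℝ | ∃ x : E, ‖x‖ = 1 ∧
      r = Real.sqrt (α * ‖(inner ℂ (T x) x : ℂ)‖ ^ 2 + β * ‖T x‖ ^ 2)} := by
    refine ⟨Real.sqrt (α * ‖T‖ ^ 2 + β * ‖T‖ ^ 2), ?_⟩
    rintro _ ⟨y, hy, rfl⟩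
    have hinner := T.norm_inner_apply_self_le hy
    gcongr
    exact T.unit_le_opNorm y hy.le
  exact (Real.sqrt_le_iff.1 (le_csSup hbdd ⟨x, hx, rfl⟩)).2

theorem mul_sq_numRad_le_sq_abNorm (hα : 0 ≤ α) (hβ : 0 ≤ β) (T : E →L[ℂ] E) :
    α * numRad T ^ 2 ≤ abNorm α β T ^ 2 := by
  rcases hα.eq_or_lt with rfl | hα'
  · simpa using sq_nonneg (abNorm 0 β T)
  have hsqrt : 0 < Real.sqrt α := Real.sqrt_pos.2 hα'
  have hN := abNorm_nonneg α β T
  have hw : numRad T * Real.sqrt α ≤ abNorm α β T := by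
    refine (le_div_iff₀ hsqrt).1 (numRad_le_of_forall (by positivity) fun x hx => ?_)
    rw [le_div_iff₀ hsqrt]
    refine le_of_pow_le_pow_left₀ two_ne_zero hN ?_
    rw [mul_pow, Real.sq_sqrt hα]
    nlinarith [le_sq_abNorm hα hβ T hx, sq_nonneg ‖T x‖]
  calc α * numRad T ^ 2 = (numRad T * Real.sqrt α) ^ 2 := by
        rw [mul_pow, Real.sq_sqrt hα, mul_comm]
    _ ≤ abNorm α β T ^ 2 := pow_le_pow_left₀ (by have := numRad_nonneg T; positivity) hw 2

theorem norm_smul_adjoint_mul_self_le_sq_abNorm [CompleteSpace E] (hα : 0 ≤ α) (hβ : 0 ≤ β)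
    (T : E →L[ℂ] E) : ‖(β : ℂ) • (adjoint T * T)‖ ≤ abNorm α β T ^ 2 := by
  have hT : IsSelfAdjoint ((β : ℂ) • (adjoint T * T)) :=
    IsSelfAdjoint.smul (Complex.conj_ofReal β) (IsSelfAdjoint.star_mul_self T)
  refine norm_le_of_forall_abs_re_inner_self_le hT.isSymmetric (sq_nonneg _) fun x hx => ?_
  have hre : RCLike.re (inner ℂ (((β : ℂ) • (adjoint T * T)) x) x) = β * ‖T x‖ ^ 2 := by
    rw [smul_apply, inner_smul_left, Complex.conj_ofReal, RCLike.re_to_complex,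
      Complex.re_ofReal_mul, apply_norm_sq_eq_inner_adjoint_left]
    rfl
  rw [hre, abs_of_nonneg (by positivity)]
  nlinarith [le_sq_abNorm hα hβ T hx, sq_nonneg ‖inner ℂ (T x) x‖]

end AlphaBetaNorm

theorem abNorm_sq_ge_general (T : H →L[ℂ] H) (α β : ℝ) (hα : 0 ≤ α) (hβ : 0 ≤ β) :
    abNorm α β T ^ 2 ≥
      max ((1 / 2) * ‖((α / 4 : ℝ) : ℂ) • (adjoint T * T + T * adjoint T) +
              ((β : ℝ) : ℂ) • (adjoint T * T)‖)
          ((1 / 3) * ‖((α / 2 : ℝ) : ℂ) • (adjoint T * T + T * adjoint T) +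
              ((β : ℝ) : ℂ) • (adjoint T * T)‖) := by
  have hα' : α * ‖adjoint T * T + T * adjoint T‖ ≤ 4 * abNorm α β T ^ 2 :=
    calc α * ‖adjoint T * T + T * adjoint T‖ ≤ α * (4 * numRad T ^ 2) := by
          gcongr; exact norm_adjoint_mul_add_mul_adjoint_le T
      _ ≤ 4 * abNorm α β T ^ 2 := by linarith [mul_sq_numRad_le_sq_abNorm hα hβ T]
  have hβ' := norm_smul_adjoint_mul_self_le_sq_abNorm hα hβ T
  have htri : ∀ t : ℝ, 0 ≤ t → ‖(t : ℂ) • (adjoint T * T + T * adjoint T) +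
      (β : ℂ) • (adjoint T * T)‖ ≤ t * ‖adjoint T * T + T * adjoint T‖ + abNorm α β T ^ 2 :=
    fun t ht => norm_add_le_of_le (by rw [norm_smul, Complex.norm_real, Real.norm_of_nonneg ht]) hβ'
  rw [ge_iff_le, max_le_iff]
  constructor
  · linarith [htri (α / 4) (by positivity)]
  · linarith [htri (α / 2) (by positivity)]

/-- Lower bounds for `‖T‖²_{α,β}` in terms of `T*T + TT*`. -/
theorem abNorm_sq_ge (T : H →L[ℂ] H) (α β : ℝ) (hα : 0 ≤ α) (hβ : 0 ≤ β)
    (hαβ : (α, β) ≠ (0, 0)) :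
    abNorm α β T ^ 2 ≥
      max ((1 / 2) * ‖((α / 4 : ℝ) : ℂ) • (adjoint T * T + T * adjoint T) +
              ((β : ℝ) : ℂ) • (adjoint T * T)‖)
          ((1 / 3) * ‖((α / 2 : ℝ) : ℂ) • (adjoint T * T + T * adjoint T) +
              ((β : ℝ) : ℂ) • (adjoint T * T)‖) :=
  abNorm_sq_ge_general T α β hα hβ
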